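/- Let G be a group and H ≤ G a subgroup such that (1) there are only finitely many conjugacy classes of subgroups of G isomorphic to H (i.e. the set of subgroups of G isomorphic to H is a finite union of orbits under conjugation by G), and (2) the normalizer N_G(H) is finite. Then H is an Aut-splitting subgroup of G. -/

import Mathlib

section Defs

variable (G : Type*) [Group G]

/-- The subgroup of inner automorphisms of `G`. -/
def Inn : Subgroup (MulAut G) := (MulAut.conj : G →* MulAut G).range

instance Inn.normal : (Inn G).Normal := by
  constructor
  intro n hn φ
  obtain ⟨g, rfl⟩ := hn
  refine ⟨φ g, ?_⟩
  ext x
  simp only [MulAut.conj_apply, MulAut.mul_apply, map_mul, map_inv, MulAut.inv_def,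
    MulEquiv.apply_symm_apply]

/-- The outer automorphism group `Out(G) = Aut(G)/Inn(G)`. -/
def Out := MulAut G ⧸ Inn G

instance : Group (Out G) := inferInstanceAs (Group (MulAut G ⧸ Inn G))

/-- The canonical projection `Aut(G) → Out(G)`. -/
def outProj : MulAut G →* Out G := QuotientGroup.mk' (Inn G)

/-- A surjective homomorphism `f : A → B` splits virtually if it admits a section on some
finite-index subgroup of `B`. -/
def SplitsVirtually {A B : Type*} [Group A] [Group B] (f : A →* B) : Prop :=
  ∃ B' : Subgroup B, B'.FiniteIndex ∧ ∃ s : (↥B') →* A, ∀ x : B', f (s x) = (x : B)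

/-- A group is residually finite if every nontrivial element survives in some finite quotient. -/
def ResiduallyFinite (G : Type*) [Group G] : Prop :=
  ∀ g : G, g ≠ 1 → ∃ (F : Type) (_ : Group F) (_ : Finite F) (φ : G →* F), φ g ≠ 1

/-- A group is residually `p` if every nontrivial element survives in some finite `p`-group
quotient. -/
def ResiduallyP (p : ℕ) (G : Type*) [Group G] : Prop :=
  ∀ g : G, g ≠ 1 →
    ∃ (F : Type) (_ : Group F) (_ : Finite F) (φ : G →* F), IsPGroup p F ∧ φ g ≠ 1

/-- A group is virtually residually `p` if some finite-index subgroup is residually `p`. -/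
def VirtuallyResiduallyP (p : ℕ) (G : Type*) [Group G] : Prop :=
  ∃ K : Subgroup G, K.FiniteIndex ∧ ResiduallyP p ↥K

/-- `Aut_{H̲}(G)`: the subgroup of automorphisms of `G` fixing `H` pointwise. -/
def autFix (H : Subgroup G) : Subgroup (MulAut G) where
  carrier := {φ | ∀ h ∈ H, φ h = h}
  one_mem' := fun _ _ => rfl
  mul_mem' := by
    intro a b ha hb h hh
    show a (b h) = h
    rw [hb h hh, ha h hh]
  inv_mem' := by
    intro a ha h hh
    show a⁻¹ h = h
    calc a⁻¹ h = a⁻¹ (a h) := by rw [ha h hh]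
    _ = h := by rw [MulAut.inv_def]; exact a.symm_apply_apply h

/-- `Aut_H(G)`: the subgroup of automorphisms of `G` mapping `H` onto itself. -/
def autSetwise (H : Subgroup G) : Subgroup (MulAut G) where
  carrier := {φ | ∀ g : G, φ g ∈ H ↔ g ∈ H}
  one_mem' := fun _ => Iff.rfl
  mul_mem' := by
    intro a b ha hb g
    show a (b g) ∈ H ↔ g ∈ H
    rw [ha, hb]
  inv_mem' := by
    intro a ha g
    show a⁻¹ g ∈ H ↔ g ∈ H
    have h1 : a (a⁻¹ g) = g := by rw [MulAut.inv_def]; exact a.apply_symm_apply g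
    have := ha (a⁻¹ g)
    rw [h1] at this
    exact this.symm

theorem mem_autSetwise {H : Subgroup G} {φ : MulAut G} :
    φ ∈ autSetwise G H ↔ ∀ g : G, φ g ∈ H ↔ g ∈ H := Iff.rfl

/-- `H` is an Aut-splitting subgroup of `G` if the restriction of `Aut(G) → Out(G)` to
`Aut_{H̲}(G)` has finite kernel and an image of finite index in `Out(G)`. -/
def IsAutSplitting (H : Subgroup G) : Prop :=
  Finite ((outProj G).comp (autFix G H).subtype).ker ∧
    ((autFix G H).map (outProj G)).FiniteIndex

/-- The conjugate `gKg⁻¹` of a subgroup. -/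
def conjSubgroup (g : G) (K : Subgroup G) : Subgroup G :=
  K.map (MulAut.conj g).toMonoidHom

end Defs

/-!
Both `H` and `C_G(H)` lie in the finite group `N_G(H)`. An automorphism fixing `H` pointwise is
inner exactly when it is conjugation by an element of `C_G(H)`, so the kernel is a quotient of
`C_G(H)`. For the index, compose each `φ ∈ Aut(G)` with an inner automorphism `c_g` moving
`φ(H)` onto one of the finitely many representatives in `S`. The restrictions
`(c_g ∘ φ)|_H` then range over finitely many maps `H → G`, and two automorphisms with the same
restriction differ by an element of `Aut_{H̲}(G) ⊔ Inn(G)`. So this subgroup has finite index in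
`Aut(G)`, hence its image, which is the image of `Aut_{H̲}(G)`, has finite index in `Out(G)`.
-/

open Subgroup

theorem Set.finite_setOf_range_eq {α β : Type*} [Finite α] (s : Set β) :
    {f : α → β | Set.range f = s}.Finite := by
  by_cases hs : s.Finite
  · exact (Set.Finite.pi' fun _ => hs).subset fun f hf a => hf ▸ Set.mem_range_self a
  · exact Set.finite_empty.subset fun f hf => hs (hf ▸ Set.finite_range f)

theorem Subgroup.finiteIndex_of_finite_range {A X : Type*} [Group A] (K : Subgroup A)
    (i : A → X) (hi : (Set.range i).Finite) (hfib : ∀ a b, i a = i b → a⁻¹ * b ∈ K) :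
    K.FiniteIndex := by
  have := hi.to_subtype
  refine finiteIndex_iff_finite_quotient.mpr <| Finite.of_surjective
    (fun x : Set.range i => (QuotientGroup.mk (Set.rangeSplitting i x) : A ⧸ K)) fun q => ?_
  induction q using QuotientGroup.induction_on with
  | H a =>
    exact ⟨⟨i a, a, rfl⟩, QuotientGroup.eq.mpr (hfib _ _ (Set.apply_rangeSplitting i _))⟩

section

variable {G : Type*} [Group G]

theorem ker_outProj : (outProj G).ker = Inn G := QuotientGroup.ker_mk' _

theorem outProj_eq_one_iff {φ : MulAut G} : outProj G φ = 1 ↔ φ ∈ Inn G :=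
  QuotientGroup.eq_one_iff φ

theorem outProj_surjective : Function.Surjective (outProj G) := QuotientGroup.mk'_surjective _

theorem finiteIndex_map_outProj {K : Subgroup (MulAut G)} (hK : (K ⊔ Inn G).FiniteIndex) :
    (K.map (outProj G)).FiniteIndex := by
  rw [finiteIndex_iff, index_map, ker_outProj, (outProj G).range_eq_top_of_surjective
    outProj_surjective, index_top, mul_one]
  exact finiteIndex_iff.mp hK

theorem inv_mul_mem_autFix_iff {H : Subgroup G} {α β : MulAut G} :
    α⁻¹ * β ∈ autFix G H ↔ ∀ h ∈ H, α h = β h :=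
  forall₂_congr fun _ _ => (MulEquiv.symm_apply_eq α).trans eq_comm

theorem conj_mem_autFix_iff {H : Subgroup G} {c : G} :
    MulAut.conj c ∈ autFix G H ↔ c ∈ centralizer (H : Set G) := by
  rw [mem_centralizer_iff]
  refine forall₂_congr fun _ _ => ?_
  rw [MulAut.conj_apply, mul_inv_eq_iff_eq_mul, eq_comm]

theorem finite_ker_outProj_comp_autFix (H : Subgroup G)
    [Finite (centralizer (H : Set G))] :
    Finite ((outProj G).comp (autFix G H).subtype).ker := by
  refine Finite.of_surjective (fun c : centralizer (H : Set G) =>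
    ⟨⟨MulAut.conj (c : G), conj_mem_autFix_iff.mpr c.2⟩,
      outProj_eq_one_iff.mpr ⟨c, rfl⟩⟩) ?_
  rintro ⟨⟨φ, hφ⟩, hker⟩
  obtain ⟨c, rfl⟩ : φ ∈ Inn G := outProj_eq_one_iff.mp hker
  exact ⟨⟨c, conj_mem_autFix_iff.mp hφ⟩, rfl⟩

theorem mk_conj_mul_of_inn_le {M : Subgroup (MulAut G)} (hM : Inn G ≤ M) (g : G) (α : MulAut G) :
    (↑(MulAut.conj g * α) : MulAut G ⧸ M) = α := by
  rw [← mul_inv_cancel_left α (MulAut.conj g * α), ← mul_assoc α⁻¹]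
  refine QuotientGroup.mk_mul_of_mem α (hM ?_)
  simpa using (Inn.normal G).conj_mem _ ⟨g, rfl⟩ α⁻¹

theorem mem_autFix_sup_inn_of_eqOn {H : Subgroup G} {α β : MulAut G} (g g' : G)
    (h : ∀ x ∈ H, (MulAut.conj g * α) x = (MulAut.conj g' * β) x) :
    α⁻¹ * β ∈ autFix G H ⊔ Inn G := by
  rw [← QuotientGroup.eq, ← mk_conj_mul_of_inn_le le_sup_right g,
    ← mk_conj_mul_of_inn_le le_sup_right g' β, QuotientGroup.eq]
  exact mem_sup_left (inv_mul_mem_autFix_iff.mpr h)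

theorem coe_conjSubgroup_map (H : Subgroup G) (g : G) (φ : MulAut G) :
    (conjSubgroup G g (H.map φ.toMonoidHom) : Set G) =
      Set.range fun h : H => (MulAut.conj g * φ) h := by
  ext x
  simp [conjSubgroup]

end

/-- If there are finitely many conjugacy classes of subgroups of `G`
isomorphic to `H` and `N_G(H)` is finite, then `H` is an Aut-splitting subgroup of `G`. -/
theorem statement14 (G : Type*) [Group G] (H : Subgroup G)
    (hconj : ∃ S : Finset (Subgroup G), ∀ K : Subgroup G, Nonempty (↥K ≃* ↥H) →
      ∃ K' ∈ S, ∃ g : G, conjSubgroup G g K = K')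
    (hnorm : Finite (Subgroup.normalizer (H : Set G))) :
    IsAutSplitting G H := by
  obtain ⟨S, hS⟩ := hconj
  have : Finite H := Finite.of_injective _ (inclusion_injective le_normalizer)
  have : Finite (centralizer (H : Set G)) :=
    Finite.of_injective _ (inclusion_injective (centralizer_le_normalizer _))
  refine ⟨finite_ker_outProj_comp_autFix H, finiteIndex_map_outProj ?_⟩
  have hrep (φ : MulAut G) : ∃ g, conjSubgroup G g (H.map φ.toMonoidHom) ∈ S := by
    obtain ⟨K', hK', g, hg⟩ :=
      hS _ ⟨(H.equivMapOfInjective φ.toMonoidHom φ.injective).symm⟩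
    exact ⟨g, hg ▸ hK'⟩
  choose g hg using hrep
  refine finiteIndex_of_finite_range _ (fun φ (h : H) => (MulAut.conj (g φ) * φ) h) ?_
    fun α β hαβ ↦ mem_autFix_sup_inn_of_eqOn (g α) (g β) fun x hx ↦ congrFun hαβ ⟨x, hx⟩
  refine (S.finite_toSet.biUnion fun K _ => Set.finite_setOf_range_eq (K : Set G)).subset ?_
  rintro _ ⟨φ, rfl⟩
  exact Set.mem_biUnion (hg φ) (coe_conjSubgroup_map H (g φ) φ).symm
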